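/- arXiv:2407.10364 — 3 statements merged into one kernel-verified Lean document; each statement's English description precedes it below -/
import Mathlib

section
/- If n is an odd positive integer with exactly m distinct prime factors, then the clique number and the chromatic number of the unitary addition Cayley graph U(ℤₙ) are both equal to m + φ(n)/2^m, where φ is Euler's totient function. -/
/-- The unitary addition Cayley graph of a ring `R`: vertices are elements of `R`,
and distinct `x`, `y` are adjacent iff `x + y` is a unit. -/
def unitaryCayley (R : Type*) [CommRing R] : SimpleGraph R where
  Adj x y := x ≠ y ∧ IsUnit (x + y)
  symm := ⟨fun x y ⟨h1, h2⟩ => ⟨h1.symm, by rwa [add_comm]⟩⟩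
  loopless := ⟨fun x ⟨h, _⟩ => h rfl⟩

/-- A proper coloring is complete if it is surjective and between every pair of
distinct color classes there is at least one edge. -/
def IsCompleteColoring {V β : Type*} (G : SimpleGraph V) (C : G.Coloring β) : Prop :=
  Function.Surjective C ∧
    ∀ c₁ c₂ : β, c₁ ≠ c₂ → ∃ x y, G.Adj x y ∧ C x = c₁ ∧ C y = c₂

/-- The achromatic number: the maximum number of colors in a complete proper coloring. -/
noncomputable def achromaticNumber {V : Type*} (G : SimpleGraph V) : ℕ :=
  sSup {n | ∃ C : G.Coloring (Fin n), IsCompleteColoring G C}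

/-!
By the Chinese remainder theorem `ℤₙ ≅ ∏ ℤ_{p^a}` is a product of `m` local rings with residue
fields `ℤ_p`, `p` odd. In each factor let `H` be the units whose residue has positive least
absolute value: `H` contains exactly one of `u, -u` for every unit `u` (so `|H| = φ(p^a)/2`),
and sums of elements of `H` are units. The vectors with all coordinates in `H`, together with the
`m` vectors that are `0` in one coordinate and `1` elsewhere, form a clique of size
`∏ |H| + m = φ(n)/2^m + m`. Conversely, colour a non-unit by a coordinate in which it is a
non-unit, and a unit by its coordinatewise representatives in `H`: in a local ring non-units are
closed under addition, and `x ≠ y` with `xᵢ = ±yᵢ` for all `i` forces `xᵢ + yᵢ = 0` for some `i`,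
so equally coloured vertices are never adjacent.
-/

open Finset Pointwise

namespace SimpleGraph

variable {V W : Type*} {G : SimpleGraph V} {G' : SimpleGraph W}

theorem IsNClique.map_embedding {k : ℕ} {s : Finset V} (hs : G.IsNClique k s) (f : G ↪g G') :
    G'.IsNClique k (s.map f.toEmbedding) := by
  refine ⟨?_, by rw [card_map, hs.card_eq]⟩
  rw [coe_map, IsClique, f.toEmbedding.injective.injOn.pairwise_image]
  exact fun a ha b hb hab => f.map_adj_iff.2 (hs.isClique ha hb hab)

theorem cliqueNum_le_of_embedding [Finite W] (f : G ↪g G') : G.cliqueNum ≤ G'.cliqueNum := by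
  obtain ⟨s, hs⟩ := G.exists_isNClique_cliqueNum
  simpa [(hs.map_embedding f).card_eq] using (hs.map_embedding f).isClique.card_le_cliqueNum

theorem cliqueNum_congr [Finite V] [Finite W] (f : G ≃g G') : G.cliqueNum = G'.cliqueNum :=
  le_antisymm (cliqueNum_le_of_embedding f.toEmbedding)
    (cliqueNum_le_of_embedding f.symm.toEmbedding)

theorem IsNClique.cliqueNum_eq_of_colorable [Finite V] {k : ℕ} {s : Finset V}
    (hs : G.IsNClique k s) (hc : G.Colorable k) : G.cliqueNum = k := by
  obtain ⟨t, ht⟩ := G.exists_isNClique_cliqueNum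
  refine le_antisymm ?_ ?_
  · simpa [ht.card_eq] using ht.isClique.card_le_of_colorable hc
  · simpa [hs.card_eq] using hs.isClique.card_le_cliqueNum

theorem IsNClique.chromaticNumber_eq_of_colorable {k : ℕ} {s : Finset V}
    (hs : G.IsNClique k s) (hc : G.Colorable k) : G.chromaticNumber = k :=
  le_antisymm hc.chromaticNumber_le (hs.card_eq ▸ hs.isClique.card_le_chromaticNumber)

end SimpleGraph

def unitaryCayleyCongr {R S : Type*} [CommRing R] [CommRing S] (e : R ≃+* S) :
    unitaryCayley R ≃g unitaryCayley S where
  toEquiv := e.toEquiv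
  map_rel_iff' := by simp [unitaryCayley, ← map_add]

structure IsUnitHalf {R : Type*} [CommRing R] (H : Finset R) : Prop where
  one_mem : 1 ∈ H
  isUnit_add : ∀ x ∈ H, ∀ y ∈ H, IsUnit (x + y)
  mem_or_neg_mem : ∀ x, IsUnit x → x ∈ H ∨ -x ∈ H

def halfRep {R : Type*} [CommRing R] [DecidableEq R] (H : Finset R) (x : R) : R :=
  if x ∈ H then x else -x

theorem eq_or_eq_neg_of_halfRep_eq {R : Type*} [CommRing R] [DecidableEq R] {H : Finset R}
    {x y : R} (h : halfRep H x = halfRep H y) : x = y ∨ x = -y := by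
  unfold halfRep at h
  split_ifs at h
  · exact .inl h
  · exact .inr h
  · exact .inr (neg_eq_iff_eq_neg.1 h)
  · exact .inl (neg_injective h)

namespace IsUnitHalf

variable {R : Type*} [CommRing R] {H : Finset R}

theorem isUnit (hH : IsUnitHalf H) {x : R} (hx : x ∈ H) : IsUnit x :=
  isUnit_of_mul_isUnit_left (mul_two x ▸ hH.isUnit_add x hx x hx)

theorem isUnit_add_of_mem_insert_zero [DecidableEq R] (hH : IsUnitHalf H) {x y : R}
    (hx : x ∈ insert 0 H) (hy : y ∈ insert 0 H) (hxy : x ≠ 0 ∨ y ≠ 0) : IsUnit (x + y) := by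
  rcases mem_insert.1 hx with rfl | hx <;> rcases mem_insert.1 hy with rfl | hy
  · simp at hxy
  · simpa using hH.isUnit hy
  · simpa using hH.isUnit hx
  · exact hH.isUnit_add x hx y hy

theorem halfRep_mem [DecidableEq R] (hH : IsUnitHalf H) {x : R} (hx : IsUnit x) :
    halfRep H x ∈ H := by
  unfold halfRep
  split_ifs with h
  · exact h
  · exact (hH.mem_or_neg_mem x hx).resolve_left h

theorem comap {S : Type*} [CommRing S] [Fintype R] [DecidableEq S] (f : R →+* S)
    [IsLocalHom f] {L : Finset S} (hL : IsUnitHalf L) : IsUnitHalf {x | f x ∈ L} where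
  one_mem := by simpa using hL.one_mem
  isUnit_add x hx y hy := by
    simp only [mem_filter, mem_univ, true_and] at hx hy
    exact (isUnit_map_iff f _).1 (by simpa using hL.isUnit_add _ hx _ hy)
  mem_or_neg_mem x hx := by simpa using hL.mem_or_neg_mem (f x) (hx.map f)

variable [Nontrivial R]

theorem zero_notMem (hH : IsUnitHalf H) : (0 : R) ∉ H :=
  fun h => not_isUnit_zero (hH.isUnit h)

theorem neg_notMem (hH : IsUnitHalf H) {x : R} (hx : x ∈ H) : -x ∉ H :=
  fun h => not_isUnit_zero (add_neg_cancel x ▸ hH.isUnit_add x hx (-x) h)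

theorem natCard_units [DecidableEq R] (hH : IsUnitHalf H) : Nat.card Rˣ = 2 * #H := by
  have hunits : Set.range ((↑) : Rˣ → R) = ↑(H ∪ -H) := by
    ext x
    simp only [coe_union, coe_neg, Set.mem_union, Finset.mem_coe, Set.mem_neg]
    exact ⟨hH.mem_or_neg_mem x, fun h => h.elim hH.isUnit fun h => neg_neg x ▸ (hH.isUnit h).neg⟩
  have hdisj : Disjoint H (-H) :=
    disjoint_left.2 fun x hx hx' => hH.neg_notMem hx (mem_neg'.1 hx')
  rw [← Nat.card_range_of_injective Units.val_injective, hunits, Nat.card_coe_set_eq,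
    Set.ncard_coe_finset, card_union_of_disjoint hdisj, card_neg, two_mul]

end IsUnitHalf

theorem not_isUnit_add_of_not_isUnit_apply {ι : Type*} {R : ι → Type*} [∀ i, CommRing (R i)]
    [∀ i, IsLocalRing (R i)] {x y : Π i, R i} {i : ι}
    (hx : ¬IsUnit (x i)) (hy : ¬IsUnit (y i)) : ¬IsUnit (x + y) :=
  fun h => IsLocalRing.nonunits_add hx hy (Pi.isUnit_iff.1 h i)

theorem not_isUnit_add_of_halfRep_eq {ι : Type*} {R : ι → Type*} [∀ i, CommRing (R i)]
    [∀ i, DecidableEq (R i)] [∀ i, Nontrivial (R i)] {H : ∀ i, Finset (R i)} {x y : Π i, R i}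
    (hxy : x ≠ y) (h : ∀ i, halfRep (H i) (x i) = halfRep (H i) (y i)) : ¬IsUnit (x + y) := by
  obtain ⟨i, hi⟩ := Function.ne_iff.1 hxy
  have hneg : x i = -y i := (eq_or_eq_neg_of_halfRep_eq (h i)).resolve_left hi
  exact fun hu => not_isUnit_zero (M₀ := R i) (by simpa [hneg] using Pi.isUnit_iff.1 hu i)

section Pi

variable {ι : Type*} [Fintype ι] [DecidableEq ι] {R : ι → Type*} [∀ i, CommRing (R i)]
  [∀ i, DecidableEq (R i)] {H : ∀ i, Finset (R i)}

def halfClique (H : ∀ i, Finset (R i)) : Finset (Π i, R i) :=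
  Fintype.piFinset H ∪ univ.image fun j => Pi.mulSingle j 0

theorem apply_mem_insert_zero_of_mem_halfClique (hH : ∀ i, IsUnitHalf (H i)) {x : Π i, R i}
    (hx : x ∈ halfClique H) (i : ι) : x i ∈ insert 0 (H i) := by
  rcases mem_union.1 hx with hx | hx
  · exact mem_insert_of_mem (Fintype.mem_piFinset.1 hx i)
  · obtain ⟨j, -, rfl⟩ := mem_image.1 hx
    by_cases hij : i = j
    · subst hij; simp
    · simp [Pi.mulSingle_eq_of_ne hij, (hH i).one_mem]

theorem eq_mulSingle_of_mem_halfClique [∀ i, Nontrivial (R i)] (hH : ∀ i, IsUnitHalf (H i))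
    {x : Π i, R i} (hx : x ∈ halfClique H) {i : ι} (hxi : x i = 0) : x = Pi.mulSingle i 0 := by
  rcases mem_union.1 hx with hx | hx
  · exact absurd (hxi ▸ Fintype.mem_piFinset.1 hx i) (hH i).zero_notMem
  · obtain ⟨j, -, rfl⟩ := mem_image.1 hx
    by_cases hij : i = j
    · rw [hij]
    · simp [Pi.mulSingle_eq_of_ne hij] at hxi

theorem isClique_halfClique [∀ i, Nontrivial (R i)] (hH : ∀ i, IsUnitHalf (H i)) :
    (unitaryCayley (Π i, R i)).IsClique (halfClique H) := by
  intro x hx y hy hxy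
  refine ⟨hxy, Pi.isUnit_iff.2 fun i => (hH i).isUnit_add_of_mem_insert_zero
    (apply_mem_insert_zero_of_mem_halfClique hH hx i)
    (apply_mem_insert_zero_of_mem_halfClique hH hy i) ?_⟩
  by_contra! h
  exact hxy ((eq_mulSingle_of_mem_halfClique hH hx h.1).trans
    (eq_mulSingle_of_mem_halfClique hH hy h.2).symm)

theorem card_halfClique [∀ i, Nontrivial (R i)] (hH : ∀ i, IsUnitHalf (H i)) :
    #(halfClique H) = ∏ i, #(H i) + Fintype.card ι := by
  have hinj : Function.Injective fun j => (Pi.mulSingle j 0 : Π i, R i) := by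
    intro j k h
    by_contra hjk
    simpa [Pi.mulSingle_eq_of_ne hjk] using congrFun h j
  have hdisj : Disjoint (Fintype.piFinset H) (univ.image fun j => Pi.mulSingle j 0) := by
    refine disjoint_right.2 fun x hx hxH => ?_
    obtain ⟨j, -, rfl⟩ := mem_image.1 hx
    exact (hH j).zero_notMem (by simpa using Fintype.mem_piFinset.1 hxH j)
  rw [halfClique, card_union_of_disjoint hdisj, Fintype.card_piFinset,
    card_image_of_injective _ hinj, card_univ]

theorem colorable_unitaryCayley_pi [∀ i, IsLocalRing (R i)] (hH : ∀ i, IsUnitHalf (H i)) :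
    (unitaryCayley (Π i, R i)).Colorable (∏ i, #(H i) + Fintype.card ι) := by
  classical
  let color (x : Π i, R i) : Fintype.piFinset H ⊕ ι :=
    if hx : ∀ i, IsUnit (x i) then
      .inl ⟨fun i => halfRep (H i) (x i), Fintype.mem_piFinset.2 fun i => (hH i).halfRep_mem (hx i)⟩
    else .inr (not_forall.1 hx).choose
  have hvalid : ∀ {x y}, (unitaryCayley (Π i, R i)).Adj x y → color x ≠ color y := by
    rintro x y ⟨hxy, hu⟩ hc
    simp only [color] at hc
    split_ifs at hc with hx hy hy
    · exact not_isUnit_add_of_halfRep_eq hxy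
        (congrFun (Subtype.ext_iff.1 (Sum.inl_injective hc))) hu
    · exact not_isUnit_add_of_not_isUnit_apply (not_forall.1 hx).choose_spec
        (Sum.inr_injective hc ▸ (not_forall.1 hy).choose_spec) hu
  simpa using (SimpleGraph.Coloring.mk color hvalid).colorable

end Pi

theorem unitaryCayley_pi_cliqueNum_eq_and_chromaticNumber_eq {ι : Type*} [Fintype ι]
    {R : ι → Type*} [∀ i, CommRing (R i)] [∀ i, IsLocalRing (R i)] [∀ i, Finite (R i)]
    (hH : ∀ i, ∃ H : Finset (R i), IsUnitHalf H) :
    (unitaryCayley (Π i, R i)).cliqueNum =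
        Fintype.card ι + Nat.card (Π i, R i)ˣ / 2 ^ Fintype.card ι ∧
      (unitaryCayley (Π i, R i)).chromaticNumber =
        ((Fintype.card ι + Nat.card (Π i, R i)ˣ / 2 ^ Fintype.card ι : ℕ) : ℕ∞) := by
  classical
  choose H hH using hH
  have hunits : Nat.card (Π i, R i)ˣ / 2 ^ Fintype.card ι = ∏ i, #(H i) := by
    rw [Nat.card_congr MulEquiv.piUnits.toEquiv, Nat.card_pi]
    simp_rw [(hH _).natCard_units]
    rw [prod_mul_distrib, prod_const, card_univ, Nat.mul_div_cancel_left _ (by positivity)]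
  have hclique : (unitaryCayley (Π i, R i)).IsNClique
      (Fintype.card ι + Nat.card (Π i, R i)ˣ / 2 ^ Fintype.card ι) (halfClique H) :=
    ⟨isClique_halfClique hH, by rw [card_halfClique hH, hunits, add_comm]⟩
  have hcol := colorable_unitaryCayley_pi hH
  rw [add_comm, ← hunits] at hcol
  exact ⟨hclique.cliqueNum_eq_of_colorable hcol, hclique.chromaticNumber_eq_of_colorable hcol⟩

namespace ZMod

theorem isUnitHalf_valMinAbs_pos {p : ℕ} [Fact p.Prime] (hp2 : p ≠ 2) :
    IsUnitHalf {u : ZMod p | 0 < u.valMinAbs} := by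
  have hneg (u : ZMod p) : (-u).valMinAbs = -u.valMinAbs := by
    refine valMinAbs_neg_of_ne_half fun h => hp2 ?_
    exact ((Nat.prime_dvd_prime_iff_eq Nat.prime_two Fact.out).1 ⟨_, h.symm⟩).symm
  refine ⟨?_, fun x hx y hy => ?_, fun x hx => ?_⟩
  · have h3 : 1 ≤ p / 2 := by have := (Fact.out : p.Prime).two_le; omega
    have h1 := valMinAbs_natCast_of_le_half h3
    rw [Nat.cast_one, Nat.cast_one] at h1
    simp [h1]
  · simp only [mem_filter, mem_univ, true_and] at hx hy
    refine isUnit_iff_ne_zero.2 fun h => ?_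
    rw [add_eq_zero_iff_eq_neg.1 h, hneg] at hx
    omega
  · have hx0 : x.valMinAbs ≠ 0 := (valMinAbs_eq_zero x).not.2 hx.ne_zero
    rcases hx0.lt_or_gt with h | h
    · right; simp [hneg, h]
    · left; simp [h]

theorem isLocalHom_castHom_pow {p a : ℕ} (hp : p.Prime) (ha : a ≠ 0) :
    IsLocalHom (castHom (dvd_pow_self p ha) (ZMod p)) := by
  have := Fact.mk hp
  refine ⟨fun x hx => ?_⟩
  rw [← natCast_zmod_val x, isUnit_natCast_iff_not_dvd_pow hp (Nat.pos_of_ne_zero ha)]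
  rw [← natCast_zmod_val x, map_natCast] at hx
  exact fun hdvd => not_isUnit_zero (((natCast_eq_zero_iff _ _).2 hdvd) ▸ hx)

theorem isLocalRing_pow {p a : ℕ} (hp : p.Prime) (ha : a ≠ 0) : IsLocalRing (ZMod (p ^ a)) :=
  haveI := Fact.mk hp
  haveI := isLocalHom_castHom_pow hp ha
  (castHom (dvd_pow_self p ha) (ZMod p)).domain_isLocalRing

theorem exists_isUnitHalf_pow {p a : ℕ} (hp : p.Prime) (hp2 : p ≠ 2) (ha : a ≠ 0) :
    ∃ H : Finset (ZMod (p ^ a)), IsUnitHalf H :=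
  haveI := Fact.mk hp
  haveI := isLocalHom_castHom_pow hp ha
  ⟨_, (isUnitHalf_valMinAbs_pos hp2).comap (castHom (dvd_pow_self p ha) (ZMod p))⟩

end ZMod

theorem stmt_1_general (n : ℕ) (hodd : Odd n) (m : ℕ)
    (hm : n.primeFactors.card = m) :
    (unitaryCayley (ZMod n)).cliqueNum = m + n.totient / 2 ^ m ∧
    (unitaryCayley (ZMod n)).chromaticNumber = ((m + n.totient / 2 ^ m : ℕ) : ℕ∞) := by
  have hn : n ≠ 0 := hodd.pos.ne'
  have hprime (p : n.primeFactors) : (p : ℕ).Prime := Nat.prime_of_mem_primeFactors p.2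
  have hne_two (p : n.primeFactors) : (p : ℕ) ≠ 2 := fun h =>
    hodd.not_two_dvd_nat (h ▸ Nat.dvd_of_mem_primeFactors p.2)
  have hexp (p : n.primeFactors) : n.factorization p ≠ 0 :=
    ((hprime p).factorization_pos_of_dvd hn (Nat.dvd_of_mem_primeFactors p.2)).ne'
  have := fun p => ZMod.isLocalRing_pow (hprime p) (hexp p)
  have (p : n.primeFactors) : NeZero ((p : ℕ) ^ n.factorization p) :=
    ⟨pow_ne_zero _ (hprime p).ne_zero⟩
  have : NeZero n := ⟨hn⟩
  have hunits : Nat.card (Π p : n.primeFactors, ZMod (p ^ n.factorization p))ˣ = n.totient := by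
    rw [← Nat.card_congr (Units.mapEquiv (ZMod.equivPi n hn).toMulEquiv).toEquiv,
      Nat.card_eq_fintype_card, ZMod.card_units_eq_totient]
  obtain ⟨hω, hχ⟩ := unitaryCayley_pi_cliqueNum_eq_and_chromaticNumber_eq
    fun p => ZMod.exists_isUnitHalf_pow (hprime p) (hne_two p) (hexp p)
  rw [Fintype.card_coe, hm, hunits] at hω hχ
  exact ⟨(SimpleGraph.cliqueNum_congr (unitaryCayleyCongr (ZMod.equivPi n hn))).trans hω,
    (SimpleGraph.chromaticNumber_congr (unitaryCayleyCongr (ZMod.equivPi n hn))).trans hχ⟩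

theorem stmt_1 (n : ℕ) (hpos : 0 < n) (hodd : Odd n) (m : ℕ)
    (hm : n.primeFactors.card = m) :
    (unitaryCayley (ZMod n)).cliqueNum = m + n.totient / 2 ^ m ∧
    (unitaryCayley (ZMod n)).chromaticNumber = ((m + n.totient / 2 ^ m : ℕ) : ℕ∞) :=
  stmt_1_general n hodd m hm
end

section
/- For any odd prime p, the achromatic number of the unitary addition Cayley graph U(ℤ_{2p}) equals p. -/
open Finset SimpleGraph

namespace IsCompleteColoring

variable {V W β γ : Type*} {G : SimpleGraph V} {H : SimpleGraph W}

lemma comp_iso {C : H.Coloring β} (hC : IsCompleteColoring H C)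
    (e : G ≃g H) : IsCompleteColoring G (C.comp e.toHom) := by
  refine ⟨hC.1.comp e.surjective, fun c₁ c₂ hc => ?_⟩
  obtain ⟨x, y, hxy, rfl, rfl⟩ := hC.2 c₁ c₂ hc
  exact ⟨e.symm x, e.symm y, e.symm.map_adj_iff.mpr hxy, by simp, by simp⟩

lemma recolor {C : G.Coloring β} (hC : IsCompleteColoring G C) (e : β ≃ γ) :
    IsCompleteColoring G ((Embedding.completeGraph e.toEmbedding).toHom.comp C) := by
  refine ⟨e.surjective.comp hC.1, fun c₁ c₂ hc => ?_⟩
  obtain ⟨x, y, hxy, hx, hy⟩ := hC.2 (e.symm c₁) (e.symm c₂) (by simpa using hc)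
  exact ⟨x, y, hxy, by simp [hx], by simp [hy]⟩

variable [Fintype V] [Fintype β]

lemma card_le_degree_add_one [DecidableRel G.Adj] {C : G.Coloring β}
    (hC : IsCompleteColoring G C) {v : V} (hv : ∀ x, C x = C v → x = v) :
    Fintype.card β ≤ G.degree v + 1 := by
  classical
  have hsurj : Set.SurjOn C (G.neighborFinset v) (univ.erase (C v)) := by
    intro c hc
    obtain ⟨x, y, hxy, hx, rfl⟩ := hC.2 (C v) c (Finset.ne_of_mem_erase hc).symm
    obtain rfl := hv x hx
    exact ⟨y, by simpa using hxy, rfl⟩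
  have := card_le_card_of_surjOn C hsurj
  rw [card_erase_of_mem (mem_univ _), card_univ, card_neighborFinset_eq_degree] at this
  omega

lemma two_mul_card_le {C : G.Coloring β} (hC : IsCompleteColoring G C)
    (hv : ∀ v, ∃ x, C x = C v ∧ x ≠ v) : 2 * Fintype.card β ≤ Fintype.card V := by
  classical
  have hfiber : ∀ c, 2 ≤ #{x | C x = c} := by
    intro c
    obtain ⟨v, rfl⟩ := hC.1 c
    obtain ⟨x, hx, hxv⟩ := hv v
    exact one_lt_card.mpr ⟨x, by simpa using hx, v, by simp, hxv⟩
  calc 2 * Fintype.card β = ∑ _c : β, 2 := by simp [mul_comm]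
    _ ≤ ∑ c : β, #{x | C x = c} := sum_le_sum fun c _ => hfiber c
    _ = Fintype.card V := (card_eq_sum_card_fiberwise fun x _ => mem_univ (C x)).symm

lemma card_le_max [DecidableRel G.Adj] {C : G.Coloring β}
    (hC : IsCompleteColoring G C) :
    Fintype.card β ≤ G.maxDegree + 1 ∨ 2 * Fintype.card β ≤ Fintype.card V := by
  by_cases h : ∃ v, ∀ x, C x = C v → x = v
  · obtain ⟨v, hv⟩ := h
    exact .inl ((hC.card_le_degree_add_one hv).trans (by gcongr; exact G.degree_le_maxDegree v))
  · push Not at h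
    exact .inr (hC.two_mul_card_le h)

end IsCompleteColoring

section achromaticNumber

variable {V W β : Type*} {G : SimpleGraph V} {H : SimpleGraph W}

lemma achromaticNumber_congr (e : G ≃g H) : achromaticNumber G = achromaticNumber H := by
  unfold achromaticNumber
  congr 1
  ext n
  exact ⟨fun ⟨C, hC⟩ => ⟨C.comp e.symm.toHom, IsCompleteColoring.comp_iso hC e.symm⟩,
    fun ⟨C, hC⟩ => ⟨C.comp e.toHom, IsCompleteColoring.comp_iso hC e⟩⟩

lemma achromaticNumber_eq_card [Fintype β] {C : G.Coloring β} (hC : IsCompleteColoring G C)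
    (hle : ∀ n (C' : G.Coloring (Fin n)), IsCompleteColoring G C' → n ≤ Fintype.card β) :
    achromaticNumber G = Fintype.card β :=
  IsGreatest.csSup_eq ⟨⟨_, hC.recolor (Fintype.equivFin β)⟩, fun n ⟨C', hC'⟩ => hle n C' hC'⟩

end achromaticNumber

section unitaryCayley

variable {R S : Type*} [CommRing R] [CommRing S]

def RingEquiv.unitaryCayleyIso (e : R ≃+* S) : unitaryCayley R ≃g unitaryCayley S where
  toEquiv := e.toEquiv
  map_rel_iff' := by
    intro x y
    simp only [unitaryCayley, RingEquiv.toEquiv_eq_coe, EquivLike.coe_coe,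
      ← map_add, e.injective.ne_iff, isUnit_map_iff]

lemma unitaryCayley_degree_le_card_units [Fintype R] [DecidableRel (unitaryCayley R).Adj] (v : R) :
    (unitaryCayley R).degree v ≤ Nat.card Rˣ := by
  classical
  have hsurj : Set.SurjOn (fun u : Rˣ => (u : R) - v) (univ : Finset Rˣ)
      ((unitaryCayley R).neighborFinset v) := by
    intro y hy
    obtain ⟨u, hu⟩ := ((mem_neighborFinset _ _ _).mp hy).2
    exact ⟨u, mem_univ _, by simp [hu]⟩
  simpa [card_neighborFinset_eq_degree] using card_le_card_of_surjOn _ hsurj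

end unitaryCayley

section zmodTwoProd

variable (K : Type*) [Field K]

lemma zmod_two_cases_of_add_eq_one {a b : ZMod 2} (h : a + b = 1) : a = 0 ∧ b = 1 ∨ a = 1 ∧ b = 0 := by
  revert a b; decide

variable {K} in
lemma unitaryCayley_zmod_two_prod_adj_iff {x y : ZMod 2 × K} :
    (unitaryCayley (ZMod 2 × K)).Adj x y ↔ x.1 + y.1 = 1 ∧ x.2 + y.2 ≠ 0 := by
  have hunit : ∀ a : ZMod 2, IsUnit a ↔ a = 1 := by decide
  simp only [unitaryCayley, Prod.isUnit_iff, Prod.fst_add, Prod.snd_add, hunit,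
    isUnit_iff_ne_zero]
  refine ⟨And.right, fun h => ⟨fun hxy => ?_, h⟩⟩
  subst hxy
  rcases zmod_two_cases_of_add_eq_one h.1 with ⟨h0, h1⟩ | ⟨h0, h1⟩ <;> simp [h0] at h1

def zmodTwoProdColoring : (unitaryCayley (ZMod 2 × K)).Coloring K :=
  Coloring.mk (fun x => if x.1 = 0 then x.2 else -x.2) <| by
    rintro ⟨a, s⟩ ⟨b, t⟩ hadj
    obtain ⟨hab, hst⟩ := unitaryCayley_zmod_two_prod_adj_iff.mp hadj
    rcases zmod_two_cases_of_add_eq_one hab with ⟨rfl, rfl⟩ | ⟨rfl, rfl⟩ <;>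
      simp only [ite_true, one_ne_zero, ite_false] <;> contrapose! hst
    · linear_combination hst
    · linear_combination -hst

@[simp]
lemma zmodTwoProdColoring_apply (x : ZMod 2 × K) :
    zmodTwoProdColoring K x = if x.1 = 0 then x.2 else -x.2 :=
  rfl

lemma isCompleteColoring_zmodTwoProdColoring :
    IsCompleteColoring _ (zmodTwoProdColoring K) := by
  refine ⟨fun c => ⟨(0, c), by simp⟩, fun c₁ c₂ hc => ?_⟩
  refine ⟨(0, c₁), (1, -c₂), ?_, by simp, by simp⟩
  rw [unitaryCayley_zmod_two_prod_adj_iff]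
  exact ⟨zero_add 1, by rwa [← sub_eq_add_neg, sub_ne_zero]⟩

lemma card_units_zmod_two_prod :
    Nat.card (ZMod 2 × K)ˣ = Nat.card K - 1 := by
  rw [Nat.card_congr MulEquiv.prodUnits.toEquiv, Nat.card_prod, Nat.card_units, Nat.card_units,
    Nat.card_zmod]
  simp

theorem achromaticNumber_unitaryCayley_zmod_two_prod [Fintype K] :
    achromaticNumber (unitaryCayley (ZMod 2 × K)) = Fintype.card K := by
  classical
  refine achromaticNumber_eq_card (isCompleteColoring_zmodTwoProdColoring K) fun n C hC => ?_
  have hdeg : (unitaryCayley (ZMod 2 × K)).maxDegree ≤ Fintype.card K - 1 :=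
    maxDegree_le_of_forall_degree_le _ _ fun v =>
      (unitaryCayley_degree_le_card_units v).trans
        (by rw [card_units_zmod_two_prod, Nat.card_eq_fintype_card])
  have hK : 0 < Fintype.card K := Fintype.card_pos
  have := IsCompleteColoring.card_le_max hC
  simp only [Fintype.card_fin, Fintype.card_prod, ZMod.card] at this
  omega

end zmodTwoProd

theorem stmt_5 (p : ℕ) (hp : p.Prime) (hodd : Odd p) :
    achromaticNumber (unitaryCayley (ZMod (2 * p))) = p := by
  have : Fact p.Prime := ⟨hp⟩
  rw [achromaticNumber_congr (ZMod.chineseRemainder hodd.coprime_two_left).unitaryCayleyIso,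
    achromaticNumber_unitaryCayley_zmod_two_prod, ZMod.card]
end

section
/- Let R = R₁ × R₂ × ⋯ × Rₘ be a finite commutative ring with unity having an odd number of elements, where each Rᵢ is a finite commutative local ring with unique maximal ideal Mᵢ. Then the clique number of the unitary addition Cayley graph U(R) is at least m + ∏_{i=1}^{m} (|Rᵢ| − |Mᵢ|)/2. -/
open Finset Function Pointwise

theorem isUnit_two_of_odd_card {R : Type*} [Ring R] [Fintype R] (h : Odd (Fintype.card R)) :
    IsUnit (2 : R) := by
  obtain ⟨n, hn⟩ := h
  have hzero := Nat.cast_card_eq_zero R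
  rw [hn] at hzero
  push_cast at hzero
  refine IsUnit.of_mul_eq_one (-n : R) ?_
  rw [mul_neg, eq_neg_of_add_eq_zero_left hzero, neg_neg]

namespace IsLocalRing

theorem exists_finset_isUnit_add (R : Type*) [CommRing R] [IsLocalRing R] [Fintype R]
    (h2 : IsUnit (2 : R)) :
    ∃ S : Finset R, S.Nonempty ∧ (∀ x ∈ S, ∀ y ∈ S, IsUnit (x + y)) ∧
      2 * #S = Fintype.card R - Nat.card (maximalIdeal R) := by
  classical
  -- an arbitrary linear order picks one of `a`, `-a` for each nonzero residue `a`
  let : LinearOrder (ResidueField R) := linearOrderOfSTO WellOrderingRel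
  set S := univ.filter fun x => residue R x < -residue R x
  have hcompl : (maximalIdeal R : Set R).toFinsetᶜ = S ∪ -S := by
    have h2k : (2 : ResidueField R) ≠ 0 := by
      simpa only [map_ofNat] using (h2.map (residue R)).ne_zero
    ext x
    simp only [mem_compl, Set.mem_toFinset, SetLike.mem_coe, ← residue_eq_zero_iff, mem_union,
      Finset.mem_neg', S, mem_filter, mem_univ, true_and, map_neg, neg_neg]
    rw [← ne_iff_lt_or_gt, Ne, eq_neg_iff_add_eq_zero, ← two_mul, mul_eq_zero, or_iff_right h2k]
  have hdisj : Disjoint S (-S) := by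
    rw [disjoint_left]
    intro x hx hnx
    simp only [Finset.mem_neg', S, mem_filter, mem_univ, true_and, map_neg, neg_neg] at hx hnx
    exact lt_asymm hx hnx
  refine ⟨S, ?_, fun x hx y hy => ?_, ?_⟩
  · have h1 : (1 : R) ∈ S ∪ -S := by simp [← hcompl]
    rcases mem_union.1 h1 with h | h
    · exact ⟨1, h⟩
    · exact ⟨-1, Finset.mem_neg'.1 h⟩
  · by_contra hxy
    rw [← mem_nonunits_iff, ← mem_maximalIdeal, ← residue_eq_zero_iff, map_add,
      add_eq_zero_iff_eq_neg] at hxy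
    simp only [S, mem_filter, mem_univ, true_and, hxy, neg_neg] at hx hy
    exact lt_asymm hx hy
  · have hcard := card_union_of_disjoint hdisj
    rw [card_neg, ← hcompl, card_compl] at hcard
    rw [← SetLike.coe_sort_coe, Nat.card_eq_card_toFinset]
    omega

end IsLocalRing

theorem isUnit_add_of_mem_insert_zero {R : Type*} [CommSemiring R] {S : Set R}
    (hS : ∀ x ∈ S, ∀ y ∈ S, IsUnit (x + y)) {a b : R} (ha : a ∈ insert 0 S) (hb : b ∈ insert 0 S)
    (hab : a ∈ S ∨ b ∈ S) : IsUnit (a + b) := by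
  have hunit : ∀ x ∈ S, IsUnit x := fun x hx =>
    isUnit_of_mul_isUnit_right (x := (2 : R)) (by rw [two_mul]; exact hS x hx x hx)
  rcases ha with rfl | ha <;> rcases hb with rfl | hb
  · obtain h | h := hab <;> exact hS 0 h 0 h
  · simpa using hunit b hb
  · simpa using hunit a ha
  · exact hS a ha b hb

theorem unitaryCayley_pi_isClique {ι : Type*} [DecidableEq ι] {R : ι → Type*}
    [∀ i, CommRing (R i)] (S : ∀ i, Set (R i)) (hS : ∀ i, ∀ x ∈ S i, ∀ y ∈ S i, IsUnit (x + y))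
    (c : ∀ i, R i) (hc : ∀ i, c i ∈ S i) :
    (unitaryCayley (∀ i, R i)).IsClique (Set.univ.pi S ∪ Set.range fun j => update c j 0) := by
  have hmem : ∀ v ∈ Set.univ.pi S ∪ Set.range (fun j => update c j 0),
      ∀ i, v i ∈ insert 0 (S i) := by
    rintro v (hv | ⟨j, rfl⟩) i
    · exact Or.inr (hv i trivial)
    · rcases eq_or_ne i j with rfl | hij
      · simp
      · simp [update_of_ne hij, hc i]
  intro v hv w hw hvw
  refine ⟨hvw, Pi.isUnit_iff.2 fun i =>
    isUnit_add_of_mem_insert_zero (hS i) (hmem v hv i) (hmem w hw i) ?_⟩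
  rcases hv with hv | ⟨j, rfl⟩
  · exact Or.inl (hv i trivial)
  rcases hw with hw | ⟨k, rfl⟩
  · exact Or.inr (hw i trivial)
  rcases eq_or_ne i j with rfl | hij
  · have hik : i ≠ k := by rintro rfl; exact hvw rfl
    simp [update_of_ne hik, hc i]
  · simp [update_of_ne hij, hc i]

theorem le_cliqueNum_unitaryCayley_pi {ι : Type*} [Fintype ι] [DecidableEq ι] {R : ι → Type*}
    [∀ i, CommRing (R i)] [∀ i, Nontrivial (R i)] [∀ i, Finite (R i)] (S : ∀ i, Finset (R i))
    (hS : ∀ i, ∀ x ∈ S i, ∀ y ∈ S i, IsUnit (x + y)) (hne : ∀ i, (S i).Nonempty) :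
    Fintype.card ι + ∏ i, #(S i) ≤ (unitaryCayley (∀ i, R i)).cliqueNum := by
  classical
  choose c hc using hne
  have hzero : ∀ i, (0 : R i) ∉ S i := fun i h =>
    not_isUnit_zero (M₀ := R i) (by simpa using hS i 0 h 0 h)
  have hinj : Injective fun j => update c j 0 := by
    intro j k hjk
    by_contra hne
    have := congrFun hjk j
    simp only [update_self, update_of_ne hne] at this
    exact hzero j (this ▸ hc j)
  have hdisj : Disjoint (Fintype.piFinset S) (univ.image fun j => update c j 0) := by
    rw [disjoint_left]
    intro v hv hv'
    obtain ⟨j, -, rfl⟩ := mem_image.1 hv'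
    exact hzero j (by simpa using Fintype.mem_piFinset.1 hv j)
  have hclique : (unitaryCayley (∀ i, R i)).IsClique
      ((Fintype.piFinset S ∪ univ.image fun j => update c j 0 : Finset _) : Set (∀ i, R i)) := by
    simpa [Fintype.coe_piFinset] using
      unitaryCayley_pi_isClique (fun i => (S i : Set (R i))) hS c hc
  calc Fintype.card ι + ∏ i, #(S i)
      = #(Fintype.piFinset S ∪ univ.image fun j => update c j 0) := by
        rw [card_union_of_disjoint hdisj, Fintype.card_piFinset, card_image_of_injective _ hinj,
          card_univ, add_comm]
    _ ≤ _ := hclique.card_le_cliqueNum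

theorem stmt_7 (m : ℕ) (R : Fin m → Type*) [∀ i, CommRing (R i)]
    [∀ i, IsLocalRing (R i)] [∀ i, Fintype (R i)]
    (hodd : Odd (Fintype.card (∀ i, R i))) :
    m + ∏ i, (Fintype.card (R i) - Nat.card (IsLocalRing.maximalIdeal (R i))) / 2 ≤
      (unitaryCayley (∀ i, R i)).cliqueNum := by
  have h2 : ∀ i, IsUnit (2 : R i) := fun i => by
    simpa only [map_ofNat] using (isUnit_two_of_odd_card hodd).map (Pi.evalRingHom R i)
  choose S hne hS hcard using fun i => IsLocalRing.exists_finset_isUnit_add (R i) (h2 i)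
  calc m + ∏ i, (Fintype.card (R i) - Nat.card (IsLocalRing.maximalIdeal (R i))) / 2
      = Fintype.card (Fin m) + ∏ i, #(S i) := by
        simp only [← hcard, Nat.mul_div_cancel_left _ two_pos, Fintype.card_fin]
    _ ≤ _ := le_cliqueNum_unitaryCayley_pi S hS hne
end
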